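/- arXiv:2110.12515 — 3 statements merged into one kernel-verified Lean document; each statement's English description precedes it below -/
import Mathlib

section
/- For the recursively defined operator family Q_{k+1}(lτ), the operator norm estimate ‖Q_{k+1}(lτ)‖ ≤ C(k,l) ‖A₀‖^{k−l} ‖A₁‖^{l} holds for all k, l ≥ 0 with l ≤ k, where C(k,l) is the binomial coefficient. -/
/-!
Induction on `l`. Each summand `A₀^(k-m) A₁ Q_m((l-1)τ)` of the recursion is bounded through the
induction hypothesis by `C(m-1, l-1) ‖A₀‖^(k-l) ‖A₁‖^l`, with an exponent of `‖A₀‖` independent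
of `m`, and the hockey-stick identity `∑_{m=l}^{k} C(m-1, l-1) = C(k, l)` sums the coefficients.
-/

open Finset

theorem ContinuousLinearMap.norm_pow_le_pow_norm {𝕜 E : Type*} [NontriviallyNormedField 𝕜]
    [SeminormedAddCommGroup E] [NormedSpace 𝕜 E] (f : E →L[𝕜] E) (n : ℕ) :
    ‖f ^ n‖ ≤ ‖f‖ ^ n := by
  cases n with
  | zero => simpa [ContinuousLinearMap.one_def] using ContinuousLinearMap.norm_id_le
  | succ n => exact norm_pow_le' f n.succ_pos

theorem Nat.sum_Icc_choose_pred (k l : ℕ) :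
    ∑ m ∈ Icc (l + 1) k, (m - 1).choose l = k.choose (l + 1) := by
  cases k with
  | zero => simp
  | succ k =>
    rw [← Nat.sum_Icc_choose k l, ← map_add_right_Icc l k 1, sum_map]
    simp

theorem norm_le_choose_mul_pow_of_recursion {R : Type*} [SeminormedRing R] {a b : R}
    (hpow : ∀ n, ‖a ^ n‖ ≤ ‖a‖ ^ n) {Q : ℕ → ℕ → R}
    (hbase : ∀ k, Q (k + 1) 0 = a ^ k)
    (hrec : ∀ k l, Q (k + 1) (l + 1) = ∑ m ∈ Icc (l + 1) k, a ^ (k - m) * b * Q m l) :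
    ∀ {k l : ℕ}, l ≤ k → ‖Q (k + 1) l‖ ≤ k.choose l * ‖a‖ ^ (k - l) * ‖b‖ ^ l := by
  intro k l
  induction l generalizing k with
  | zero => simpa [hbase] using hpow k
  | succ l ih =>
    intro hlk
    have hterm : ∀ m ∈ Icc (l + 1) k, ‖a ^ (k - m) * b * Q m l‖ ≤
        (m - 1).choose l * (‖a‖ ^ (k - (l + 1)) * ‖b‖ ^ (l + 1)) := by
      intro m hm
      obtain ⟨hlm, hmk⟩ := mem_Icc.mp hm
      obtain ⟨n, rfl⟩ : ∃ n, m = n + 1 := ⟨m - 1, by omega⟩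
      have hexp : k - (l + 1) = (k - (n + 1)) + (n - l) := by omega
      calc ‖a ^ (k - (n + 1)) * b * Q (n + 1) l‖
          ≤ ‖a ^ (k - (n + 1))‖ * ‖b‖ * ‖Q (n + 1) l‖ := norm_mul₃_le
        _ ≤ ‖a‖ ^ (k - (n + 1)) * ‖b‖ * (n.choose l * ‖a‖ ^ (n - l) * ‖b‖ ^ l) := by
          gcongr
          exacts [hpow _, ih (by omega)]
        _ = (n + 1 - 1).choose l * (‖a‖ ^ (k - (l + 1)) * ‖b‖ ^ (l + 1)) := by
          rw [Nat.add_sub_cancel, hexp, pow_add]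
          ring
    calc ‖Q (k + 1) (l + 1)‖
        ≤ ∑ m ∈ Icc (l + 1) k, ‖a ^ (k - m) * b * Q m l‖ := hrec k l ▸ norm_sum_le _ _
      _ ≤ ∑ m ∈ Icc (l + 1) k, (m - 1).choose l * (‖a‖ ^ (k - (l + 1)) * ‖b‖ ^ (l + 1)) :=
          sum_le_sum hterm
      _ = k.choose (l + 1) * ‖a‖ ^ (k - (l + 1)) * ‖b‖ ^ (l + 1) := by
          rw [← sum_mul, ← Nat.cast_sum, Nat.sum_Icc_choose_pred, mul_assoc]

theorem stmt_4_general {X : Type*} [NormedAddCommGroup X] [NormedSpace ℝ X]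
    (A₀ A₁ : X →L[ℝ] X)
    (Q : ℕ → ℤ → (X →L[ℝ] X))
    (hbase : ∀ k : ℕ, Q (k + 1) 0 = A₀ ^ k)
    (hrec : ∀ k l : ℕ, 1 ≤ l →
      Q (k + 1) l = ∑ m ∈ Finset.Icc l k, A₀ ^ (k - m) * A₁ * Q m ((l : ℤ) - 1)) :
    ∀ k l : ℕ, l ≤ k →
      ‖Q (k + 1) l‖ ≤ (k.choose l : ℝ) * ‖A₀‖ ^ (k - l) * ‖A₁‖ ^ l := by
  intro k l hlk
  refine norm_le_choose_mul_pow_of_recursion (Q := fun k l => Q k l) A₀.norm_pow_le_pow_norm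
    hbase (fun k l => ?_) hlk
  simpa using hrec k (l + 1) (by omega)

theorem stmt_4 {X : Type*} [NormedAddCommGroup X] [NormedSpace ℝ X]
    (A₀ A₁ : X →L[ℝ] X) (τ : ℝ) (hτ : 0 < τ)
    (Q : ℕ → ℤ → (X →L[ℝ] X))
    (h0 : ∀ l : ℤ, Q 0 l = 0)
    (hneg : ∀ k : ℕ, Q k (-1) = 0)
    (hbase : ∀ k : ℕ, Q (k + 1) 0 = A₀ ^ k)
    (hrec : ∀ k l : ℕ, 1 ≤ l →
      Q (k + 1) l = ∑ m ∈ Finset.Icc l k, A₀ ^ (k - m) * A₁ * Q m ((l : ℤ) - 1)) :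
    ∀ k l : ℕ, l ≤ k →
      ‖Q (k + 1) l‖ ≤ (k.choose l : ℝ) * ‖A₀‖ ^ (k - l) * ‖A₁‖ ^ l :=
  stmt_4_general A₀ A₁ Q hbase hrec
end

section
/- Let A₀, A₁ be commuting bounded linear operators on a Banach space X (A₀A₁ = A₁A₀), τ > 0, and set A₂ = A₁ exp(−A₀τ). Then the delayed Dyson–Phillips series S(t;τ) = ∑_{n=0}^∞ A₁ⁿ exp(A₀(t − nτ)) (t−nτ)ⁿ/n! · 𝟙_{t ≥ nτ} equals exp(A₀ t) · exp_τ(A₂ t), where exp_τ(A₂ t) = ∑_{n=0}^∞ A₂ⁿ (t−nτ)ⁿ/n! · 𝟙_{t ≥ nτ} is the pure delayed operator exponential; moreover exp(A₀t) and exp_τ(A₂t) commute. -/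
/-!
Since `A₁` commutes with `A₀`, it commutes with every `exp (s • A₀)`, so
`A₂ ^ n = A₁ ^ n * exp ((-(n * τ)) • A₀)`. By the group law of `s ↦ exp (s • A₀)`, the `n`-th
term of `S(t; τ)` is therefore `exp (t • A₀)` times the `n`-th term of `exp_τ (A₂ t)`.
For `τ ≥ 0` the latter series is dominated termwise by the exponential series of `t • A₂`, so it
converges and `exp (t • A₀)` can be pulled out of the sum; as it commutes with every `A₂ ^ n`, it
commutes with the sum.
-/

open NormedSpace

section DelayedExp

variable {𝔸 : Type*} [NormedRing 𝔸] [NormedAlgebra ℝ 𝔸]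

noncomputable def delayedExpTerm (τ t : ℝ) (B : 𝔸) (n : ℕ) : 𝔸 :=
  if (n : ℝ) * τ ≤ t then ((t - n * τ) ^ n / n.factorial : ℝ) • B ^ n else 0

/-- The pure delayed exponential `exp_τ (B t)`. -/
noncomputable def delayedExp (τ t : ℝ) (B : 𝔸) : 𝔸 :=
  ∑' n : ℕ, delayedExpTerm τ t B n

/-- The delayed Dyson–Phillips series `S(t; τ)` of the pair `(A₀, A₁)`. -/
noncomputable def delayedDysonPhillips (τ t : ℝ) (A₀ A₁ : 𝔸) : 𝔸 :=
  ∑' n : ℕ, if (n : ℝ) * τ ≤ t then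
    ((t - n * τ) ^ n / n.factorial : ℝ) • (A₁ ^ n * exp ((t - n * τ) • A₀)) else 0

theorem norm_delayedExpTerm_le {τ : ℝ} (hτ : 0 ≤ τ) (t : ℝ) (B : 𝔸) (n : ℕ) :
    ‖delayedExpTerm τ t B n‖ ≤ ‖((n.factorial : ℝ)⁻¹) • (t • B) ^ n‖ := by
  unfold delayedExpTerm
  split_ifs with h
  · have hnτ : 0 ≤ t - n * τ := sub_nonneg.2 h
    have ht : 0 ≤ t := le_trans (by positivity) h
    rw [smul_pow, smul_smul, norm_smul, norm_smul, Real.norm_of_nonneg (by positivity),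
      Real.norm_of_nonneg (by positivity), div_eq_inv_mul]
    gcongr
    linarith [mul_nonneg (Nat.cast_nonneg (α := ℝ) n) hτ]
  · rw [norm_zero]
    exact norm_nonneg _

theorem Commute.delayedExp_right {a B : 𝔸} (h : Commute a B) (τ t : ℝ) :
    Commute a (delayedExp τ t B) :=
  .tsum_right a fun n => by
    unfold delayedExpTerm
    split_ifs
    · exact (h.pow_right n).smul_right _
    · exact .zero_right a

variable [CompleteSpace 𝔸]

theorem summable_delayedExpTerm {τ : ℝ} (hτ : 0 ≤ τ) (t : ℝ) (B : 𝔸) :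
    Summable (delayedExpTerm τ t B) :=
  .of_norm_bounded (norm_expSeries_summable' (t • B)) (norm_delayedExpTerm_le hτ t B)

theorem exp_add_smul (s u : ℝ) (x : 𝔸) : exp ((s + u) • x) = exp (s • x) * exp (u • x) := by
  let _ : NormedAlgebra ℚ 𝔸 := .restrictScalars ℚ ℝ 𝔸
  rw [add_smul, exp_add_of_commute (((Commute.refl x).smul_left s).smul_right u)]

theorem exp_smul_pow (s : ℝ) (x : 𝔸) (n : ℕ) : exp (s • x) ^ n = exp ((n * s) • x) := by
  let _ : NormedAlgebra ℚ 𝔸 := .restrictScalars ℚ ℝ 𝔸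
  rw [← exp_nsmul, mul_smul, Nat.cast_smul_eq_nsmul]

theorem Commute.pow_mul_exp_sub_mul_smul {A₀ A₁ : 𝔸} (h : Commute A₀ A₁) (t τ : ℝ) (n : ℕ) :
    A₁ ^ n * NormedSpace.exp ((t - n * τ) • A₀) =
      NormedSpace.exp (t • A₀) * (A₁ * NormedSpace.exp ((-τ) • A₀)) ^ n := by
  have hpow :
      (A₁ * NormedSpace.exp ((-τ) • A₀)) ^ n = A₁ ^ n * NormedSpace.exp ((n * -τ) • A₀) := by
    rw [(h.symm.smul_right (-τ)).exp_right.mul_pow, exp_smul_pow]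
  rw [hpow, ((h.smul_left t).exp_left.pow_right n).left_comm, ← exp_add_smul]
  congr 3
  ring

theorem Commute.delayedDysonPhillips_eq {A₀ A₁ : 𝔸} (h : Commute A₀ A₁) {τ : ℝ} (hτ : 0 ≤ τ)
    (t : ℝ) :
    delayedDysonPhillips τ t A₀ A₁ =
      NormedSpace.exp (t • A₀) * delayedExp τ t (A₁ * NormedSpace.exp ((-τ) • A₀)) := by
  rw [delayedDysonPhillips, delayedExp,
    ← (summable_delayedExpTerm hτ t _).tsum_mul_left (NormedSpace.exp (t • A₀))]
  refine tsum_congr fun n => ?_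
  unfold delayedExpTerm
  split_ifs
  · rw [mul_smul_comm, h.pow_mul_exp_sub_mul_smul]
  · rw [mul_zero]

end DelayedExp

theorem stmt_11_general {X : Type*} [NormedAddCommGroup X] [NormedSpace ℝ X] [CompleteSpace X]
    (A₀ A₁ : X →L[ℝ] X) (hcomm : A₀ * A₁ = A₁ * A₀) (τ : ℝ) (hτ : 0 < τ)
    (t : ℝ) :
    (∑' n : ℕ, if (n : ℝ) * τ ≤ t then
        ((t - n * τ) ^ n / n.factorial : ℝ) • (A₁ ^ n * NormedSpace.exp ((t - n * τ) • A₀))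
      else 0)
      = NormedSpace.exp (t • A₀) *
        (∑' n : ℕ, if (n : ℝ) * τ ≤ t then
            ((t - n * τ) ^ n / n.factorial : ℝ) • (A₁ * NormedSpace.exp ((-τ) • A₀)) ^ n
          else 0) ∧
    Commute (NormedSpace.exp (t • A₀))
      (∑' n : ℕ, if (n : ℝ) * τ ≤ t then
          ((t - n * τ) ^ n / n.factorial : ℝ) • (A₁ * NormedSpace.exp ((-τ) • A₀)) ^ n
        else 0) := by
  have h : Commute A₀ A₁ := hcomm
  have hA₂ : Commute (exp (t • A₀)) (A₁ * exp ((-τ) • A₀)) :=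
    ((h.mul_right ((Commute.refl A₀).smul_right (-τ)).exp_right).smul_left t).exp_left
  exact ⟨h.delayedDysonPhillips_eq hτ.le t, hA₂.delayedExp_right τ t⟩

theorem stmt_11 {X : Type*} [NormedAddCommGroup X] [NormedSpace ℝ X] [CompleteSpace X]
    (A₀ A₁ : X →L[ℝ] X) (hcomm : A₀ * A₁ = A₁ * A₀) (τ : ℝ) (hτ : 0 < τ)
    (t : ℝ) (ht : 0 ≤ t) :
    (∑' n : ℕ, if (n : ℝ) * τ ≤ t then
        ((t - n * τ) ^ n / n.factorial : ℝ) • (A₁ ^ n * NormedSpace.exp ((t - n * τ) • A₀))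
      else 0)
      = NormedSpace.exp (t • A₀) *
        (∑' n : ℕ, if (n : ℝ) * τ ≤ t then
            ((t - n * τ) ^ n / n.factorial : ℝ) • (A₁ * NormedSpace.exp ((-τ) • A₀)) ^ n
          else 0) ∧
    Commute (NormedSpace.exp (t • A₀))
      (∑' n : ℕ, if (n : ℝ) * τ ≤ t then
          ((t - n * τ) ^ n / n.factorial : ℝ) • (A₁ * NormedSpace.exp ((-τ) • A₀)) ^ n
        else 0) :=
  stmt_11_general A₀ A₁ hcomm τ hτ t
end

section
/- Let A₀, A₁ be bounded operators on a Banach space. The function S(t;τ) = ∑_{k=0}^∞ ∑_{l=0}^{k} Q_{k+1}(lτ) (t − lτ)₊ᵏ / k! (with Q defined by the non-commutative recursion Q_{k+1}(0)=A₀ᵏ, Q_{k+1}(lτ) = ∑_{m=l}^k A₀^{k−m} A₁ Q_m((l−1)τ)) satisfies ‖S(t;τ) − I‖ ≤ exp((‖A₀‖+‖A₁‖)t) − 1 for all t ≥ 0; in particular S(t;τ) → I in operator norm as t → 0⁺. -/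
/-!
Induction on `l`, with the hockey-stick identity `∑_{j=l}^{k} C(j,l) = C(k+1,l+1)`, gives
`‖Q_{k+1}(lτ)‖ ≤ C(k,l) ‖A₀‖^{k-l} ‖A₁‖^l`. Since `0 ≤ (t - lτ)₊ ≤ t`, the binomial theorem then
bounds the `k`-th term of `S(t)` by `((‖A₀‖ + ‖A₁‖) t)^k / k!`, and the `k = 0` term is `I`, so
`S(t) - I` is dominated by the tail `exp((‖A₀‖ + ‖A₁‖) t) - 1` of the exponential series.
-/

open Finset

namespace ContinuousLinearMap

variable {𝕜 E : Type*} [NontriviallyNormedField 𝕜] [SeminormedAddCommGroup E] [NormedSpace 𝕜 E]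

theorem norm_pow_le_pow_norm_s12 (A : E →L[𝕜] E) (n : ℕ) : ‖A ^ n‖ ≤ ‖A‖ ^ n := by
  rcases n.eq_zero_or_pos with rfl | hn
  · simpa [one_def] using norm_id_le
  · exact norm_pow_le' A hn

theorem norm_le_choose_mul_pow_of_delay_rec (A₀ A₁ : E →L[𝕜] E) (Q : ℕ → ℤ → (E →L[𝕜] E))
    (hbase : ∀ k : ℕ, Q (k + 1) 0 = A₀ ^ k)
    (hrec : ∀ k l : ℕ, 1 ≤ l →
      Q (k + 1) l = ∑ m ∈ Icc l k, A₀ ^ (k - m) * A₁ * Q m ((l : ℤ) - 1))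
    {k l : ℕ} (hlk : l ≤ k) :
    ‖Q (k + 1) l‖ ≤ k.choose l * ‖A₀‖ ^ (k - l) * ‖A₁‖ ^ l := by
  induction l generalizing k with
  | zero => simpa [hbase] using norm_pow_le_pow_norm_s12 A₀ k
  | succ l ih =>
    obtain ⟨k, rfl⟩ : ∃ j, k = j + 1 := ⟨k - 1, by omega⟩
    have hsum : Q (k + 1 + 1) ↑(l + 1) = ∑ j ∈ Icc l k, A₀ ^ (k - j) * A₁ * Q (j + 1) l := by
      rw [hrec _ _ (by omega), ← map_add_right_Icc l k 1, sum_map]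
      simp
    calc ‖Q (k + 1 + 1) ↑(l + 1)‖
        ≤ ∑ j ∈ Icc l k, ‖A₀ ^ (k - j) * A₁ * Q (j + 1) l‖ := hsum ▸ norm_sum_le _ _
      _ ≤ ∑ j ∈ Icc l k, (j.choose l : ℝ) * (‖A₀‖ ^ (k - l) * ‖A₁‖ ^ (l + 1)) := by
        refine sum_le_sum fun j hj => ?_
        have hlj : l ≤ j ∧ j ≤ k := mem_Icc.mp hj
        calc ‖A₀ ^ (k - j) * A₁ * Q (j + 1) l‖
            ≤ ‖A₀‖ ^ (k - j) * ‖A₁‖ * (j.choose l * ‖A₀‖ ^ (j - l) * ‖A₁‖ ^ l) := by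
              refine (norm_mul₃_le ..).trans ?_
              gcongr
              exacts [norm_pow_le_pow_norm_s12 A₀ _, ih hlj.1]
          _ = j.choose l * (‖A₀‖ ^ (k - j + (j - l)) * ‖A₁‖ ^ (l + 1)) := by ring
          _ = j.choose l * (‖A₀‖ ^ (k - l) * ‖A₁‖ ^ (l + 1)) := by
              rw [show k - j + (j - l) = k - l by omega]
      _ = (k + 1).choose (l + 1) * ‖A₀‖ ^ (k + 1 - (l + 1)) * ‖A₁‖ ^ (l + 1) := by
        rw [← sum_mul, ← Nat.cast_sum, Nat.sum_Icc_choose, Nat.add_sub_add_right, mul_assoc]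

end ContinuousLinearMap

theorem norm_sum_delay_smul_le {F : Type*} [SeminormedAddCommGroup F] [NormedSpace ℝ F]
    (Q : ℕ → ℤ → F) {a b τ t : ℝ} (hτ : 0 ≤ τ) (ht : 0 ≤ t) (k : ℕ)
    (hQ : ∀ l ≤ k, ‖Q (k + 1) l‖ ≤ k.choose l * a ^ (k - l) * b ^ l) :
    ‖∑ l ∈ range (k + 1), ((max (t - l * τ) 0) ^ k / k.factorial : ℝ) • Q (k + 1) l‖
      ≤ ((a + b) * t) ^ k / k.factorial := by
  calc ‖∑ l ∈ range (k + 1), ((max (t - l * τ) 0) ^ k / k.factorial : ℝ) • Q (k + 1) l‖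
      ≤ ∑ l ∈ range (k + 1), t ^ k / k.factorial * (k.choose l * a ^ (k - l) * b ^ l) := by
        refine (norm_sum_le _ _).trans (sum_le_sum fun l hl => ?_)
        have hdelay : max (t - l * τ) 0 ≤ t := max_le (sub_le_self _ (by positivity)) ht
        rw [norm_smul, Real.norm_of_nonneg (by positivity)]
        gcongr
        exact hQ l (Nat.lt_succ_iff.mp (mem_range.mp hl))
    _ = ((a + b) * t) ^ k / k.factorial := by
        have hbinom :
            ∑ l ∈ range (k + 1), (k.choose l : ℝ) * a ^ (k - l) * b ^ l = (a + b) ^ k := by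
          rw [add_comm a b, add_pow]
          exact sum_congr rfl fun _ _ => by ring
        rw [← mul_sum, hbinom, mul_pow]
        ring

theorem norm_tsum_sub_zero_le_exp_sub_one {F : Type*} [NormedAddCommGroup F] [CompleteSpace F]
    {g : ℕ → F} {x : ℝ} (hg : ∀ k, ‖g k‖ ≤ x ^ k / k.factorial) :
    ‖∑' k, g k - g 0‖ ≤ Real.exp x - 1 := by
  have hexp : HasSum (fun k : ℕ => x ^ k / k.factorial) (Real.exp x) := by
    rw [Real.exp_eq_exp_ℝ]; exact NormedSpace.expSeries_div_hasSum_exp x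
  have hsummable : Summable g := .of_norm_bounded hexp.summable hg
  rw [hsummable.tsum_eq_zero_add, add_sub_cancel_left]
  refine tsum_of_norm_bounded ?_ fun k => hg (k + 1)
  simpa using (hasSum_nat_add_iff' 1).mpr hexp

theorem stmt_12_general {X : Type*} [NormedAddCommGroup X] [NormedSpace ℝ X] [CompleteSpace X]
    (A₀ A₁ : X →L[ℝ] X) (τ : ℝ) (hτ : 0 < τ)
    (Q : ℕ → ℤ → (X →L[ℝ] X))
    (hbase : ∀ k : ℕ, Q (k + 1) 0 = A₀ ^ k)
    (hrec : ∀ (k l : ℕ), 1 ≤ l →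
      Q (k + 1) l = ∑ m ∈ Finset.Icc l k, A₀ ^ (k - m) * A₁ * Q m ((l : ℤ) - 1))
    (S : ℝ → (X →L[ℝ] X))
    (hS : ∀ t : ℝ, S t = ∑' k : ℕ, ∑ l ∈ Finset.range (k + 1),
      ((max (t - l * τ) 0) ^ k / k.factorial : ℝ) • Q (k + 1) l) :
    (∀ t : ℝ, 0 ≤ t → ‖S t - 1‖ ≤ Real.exp ((‖A₀‖ + ‖A₁‖) * t) - 1) ∧
    Filter.Tendsto S (nhdsWithin 0 (Set.Ioi 0)) (nhds 1) := by
  have hbound (t : ℝ) (ht : 0 ≤ t) : ‖S t - 1‖ ≤ Real.exp ((‖A₀‖ + ‖A₁‖) * t) - 1 := by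
    have hleading : ∑ l ∈ range (0 + 1), ((max (t - l * τ) 0) ^ 0 / (0 : ℕ).factorial : ℝ) •
        Q (0 + 1) l = 1 := by
      simp [hbase 0]
    rw [hS t, ← hleading]
    refine norm_tsum_sub_zero_le_exp_sub_one fun k => norm_sum_delay_smul_le Q hτ.le ht k ?_
    exact fun l hl => ContinuousLinearMap.norm_le_choose_mul_pow_of_delay_rec A₀ A₁ Q hbase hrec hl
  refine ⟨hbound, tendsto_iff_norm_sub_tendsto_zero.mpr ?_⟩
  have hexp : Filter.Tendsto (fun t : ℝ => Real.exp ((‖A₀‖ + ‖A₁‖) * t) - 1)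
      (nhdsWithin 0 (Set.Ioi 0)) (nhds 0) := by
    have hcont : Continuous fun t : ℝ => Real.exp ((‖A₀‖ + ‖A₁‖) * t) - 1 := by fun_prop
    simpa using (hcont.tendsto 0).mono_left nhdsWithin_le_nhds
  refine squeeze_zero' (.of_forall fun _ => norm_nonneg _) ?_ hexp
  filter_upwards [self_mem_nhdsWithin] with t ht using hbound t (le_of_lt ht)

theorem stmt_12 {X : Type*} [NormedAddCommGroup X] [NormedSpace ℝ X] [CompleteSpace X]
    (A₀ A₁ : X →L[ℝ] X) (τ : ℝ) (hτ : 0 < τ)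
    (Q : ℕ → ℤ → (X →L[ℝ] X))
    (h0 : ∀ l : ℤ, Q 0 l = 0)
    (hneg : ∀ k : ℕ, Q k (-1) = 0)
    (hbase : ∀ k : ℕ, Q (k + 1) 0 = A₀ ^ k)
    (hrec : ∀ (k l : ℕ), 1 ≤ l →
      Q (k + 1) l = ∑ m ∈ Finset.Icc l k, A₀ ^ (k - m) * A₁ * Q m ((l : ℤ) - 1))
    (S : ℝ → (X →L[ℝ] X))
    (hS : ∀ t : ℝ, S t = ∑' k : ℕ, ∑ l ∈ Finset.range (k + 1),
      ((max (t - l * τ) 0) ^ k / k.factorial : ℝ) • Q (k + 1) l) :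
    (∀ t : ℝ, 0 ≤ t → ‖S t - 1‖ ≤ Real.exp ((‖A₀‖ + ‖A₁‖) * t) - 1) ∧
    Filter.Tendsto S (nhdsWithin 0 (Set.Ioi 0)) (nhds 1) :=
  stmt_12_general A₀ A₁ τ hτ Q hbase hrec S hS
end
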